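/- arXiv:2005.08253 — 2 statements merged into one kernel-verified Lean document; each statement's English description precedes it below -/
import Mathlib

section
/- Let K be an algebraically closed field of characteristic 0 and let n ≥ 2 and c ≥ 2 be integers. Then there exists a K-linear subspace H of the space of (n+1)×c matrices over K with dim_K H = (n−1)(c−2) such that every nonzero element of H has rank at least 3. (This is the sharpness of the bound dim H ≤ (n+1)c − 2c − 2n + 2 in Drézet's construction for p = 1, realized by the explicit matrices of Example 12; equivalently, it gives the existence of 1-type uniform Steiner bundles on Pⁿ of minimal rank c + 2(n−1) with c₁ = −c.) -/
/-!
Read a matrix diagonal by diagonal: the entries `M i (i + d)` are the coefficients of a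
polynomial in `X`. The example matrices are built so that every diagonal of the image of `f`
is the corresponding diagonal of `f` multiplied by `(X - 1) * (X - 2)`. A nonzero multiple of
`(X - 1) * (X - 2)` has at least three nonzero coefficients, since a binomial `x X^k + y X^m`
vanishing at `1` and at `2` forces `2 ^ (m - k) = 1`. On the lowest diagonal where `f` is
nonzero, the image matrix is zero strictly below it, so three nonzero entries there span an
upper triangular `3 × 3` submatrix with nonzero diagonal, giving rank at least 3.
-/

open Polynomial

theorem three_le_card_support_X_sub_one_mul_X_sub_two_mul {R : Type*} [CommRing R] [IsDomain R]
    [CharZero R] {p : R[X]} (hp : p ≠ 0) : 3 ≤ ((X - 1) * (X - 2) * p).support.card := by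
  set q := (X - 1) * (X - 2) * p with hq
  have hq0 : q ≠ 0 := mul_ne_zero (mul_ne_zero (X_sub_C_ne_zero 1) (X_sub_C_ne_zero 2)) hp
  have h1 : q.eval 1 = 0 := by simp [hq]
  have h2 : q.eval 2 = 0 := by simp [hq]
  by_contra! hcard
  interval_cases hc : q.support.card
  · exact hq0 (card_support_eq_zero.mp hc)
  · obtain ⟨k, x, hx, hqx⟩ := card_support_eq_one.mp hc
    simp [hqx, hx] at h1
  · obtain ⟨k, m, hkm, x, y, hx, hy, hqxy⟩ := card_support_eq_two.mp hc
    have hyx : y = -x := by simp [hqxy] at h1; linear_combination h1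
    have hpow : (2 : R) ^ (m - k) = 1 := by
      have : x * 2 ^ k * (1 - 2 ^ (m - k)) = 0 := by
        simp only [hqxy, eval_add, eval_mul, eval_C, eval_pow, eval_X, hyx] at h2
        rw [← Nat.add_sub_cancel' hkm.le, pow_add] at h2
        linear_combination h2
      have := (mul_eq_zero.mp this).resolve_left (mul_ne_zero hx (pow_ne_zero _ two_ne_zero))
      linear_combination -this
    have : 2 ^ (m - k) = 1 := by exact_mod_cast hpow
    simp at this
    omega

namespace Matrix

variable {R : Type*} {a b : ℕ}

def extendByZero [Zero R] (M : Matrix (Fin a) (Fin b) R) (i j : ℤ) : R :=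
  if h : 0 ≤ i ∧ i < a ∧ 0 ≤ j ∧ j < b then M ⟨i.toNat, by omega⟩ ⟨j.toNat, by omega⟩ else 0

section Zero

variable [Zero R] (M : Matrix (Fin a) (Fin b) R)

@[simp]
lemma extendByZero_natCast (i : Fin a) (j : Fin b) : M.extendByZero i j = M i j := by
  simp [extendByZero]

lemma extendByZero_eq_zero {i j : ℤ} (h : ¬(0 ≤ i ∧ i < a ∧ 0 ≤ j ∧ j < b)) :
    M.extendByZero i j = 0 :=
  dif_neg h

lemma bounds_of_extendByZero_ne_zero {i j : ℤ} (h : M.extendByZero i j ≠ 0) :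
    0 ≤ i ∧ i < a ∧ 0 ≤ j ∧ j < b :=
  not_not.mp (mt M.extendByZero_eq_zero h)

end Zero

@[simp]
lemma extendByZero_add [AddZeroClass R] (M N : Matrix (Fin a) (Fin b) R) (i j : ℤ) :
    (M + N).extendByZero i j = M.extendByZero i j + N.extendByZero i j := by
  unfold extendByZero; split <;> simp

@[simp]
lemma extendByZero_smul [Zero R] [SMulZeroClass R R] (c : R) (M : Matrix (Fin a) (Fin b) R)
    (i j : ℤ) :
    (c • M).extendByZero i j = c • M.extendByZero i j := by
  unfold extendByZero; split <;> simp

section Semiring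

variable [Semiring R] (M : Matrix (Fin a) (Fin b) R)

noncomputable def diagPoly (d : ℤ) : R[X] :=
  ∑ k ∈ Finset.range a, monomial k (M.extendByZero k (k + d))

lemma coeff_diagPoly (d : ℤ) (k : ℕ) : (M.diagPoly d).coeff k = M.extendByZero k (k + d) := by
  simp only [diagPoly, finsetSum_coeff, coeff_monomial, Finset.sum_ite_eq', Finset.mem_range]
  split_ifs with hk
  · rfl
  · exact (M.extendByZero_eq_zero (by omega)).symm

lemma diagPoly_sub_ne_zero {i j : ℤ} (h : M.extendByZero i j ≠ 0) : M.diagPoly (j - i) ≠ 0 := by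
  obtain ⟨hi, -⟩ := M.bounds_of_extendByZero_ne_zero h
  lift i to ℕ using hi
  intro h0
  apply h
  simpa [h0] using (M.coeff_diagPoly (j - i) i).symm

lemma exists_lowest_diagPoly_ne_zero (hM : M ≠ 0) :
    ∃ d, M.diagPoly d ≠ 0 ∧ ∀ i j : ℤ, j < i + d → M.extendByZero i j = 0 := by
  have hbdd : ∃ d₀, ∀ d, M.diagPoly d ≠ 0 → d₀ ≤ d := by
    refine ⟨-a, fun d hd => ?_⟩
    have hk := leadingCoeff_ne_zero.mpr hd
    rw [leadingCoeff, coeff_diagPoly] at hk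
    have := M.bounds_of_extendByZero_ne_zero hk
    omega
  have hne : ∃ d, M.diagPoly d ≠ 0 := by
    obtain ⟨i, j, hij⟩ : ∃ i j, M i j ≠ 0 := by
      by_contra! h
      exact hM (Matrix.ext h)
    exact ⟨_, M.diagPoly_sub_ne_zero (i := i) (j := j) (by simpa using hij)⟩
  obtain ⟨d, hd, hleast⟩ := Int.exists_least_of_bdd hbdd hne
  refine ⟨d, hd, fun i j hij => ?_⟩
  by_contra h
  have := hleast _ (M.diagPoly_sub_ne_zero h)
  omega

end Semiring

theorem card_le_rank_of_upperTriangular {m n ι : Type*} [CommRing R] [IsDomain R] [Fintype n]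
    [Fintype ι] [LinearOrder ι] (M : Matrix m n R) (r : ι → m) (s : ι → n)
    (hlow : ∀ t u, u < t → M (r t) (s u) = 0) (hdiag : ∀ t, M (r t) (s t) ≠ 0) :
    Fintype.card ι ≤ M.rank := by
  have hN : (M.submatrix r s).IsUpperTriangular := fun t u h => hlow t u h
  have hdet : (M.submatrix r s).det ≠ 0 := by
    rw [det_of_isUpperTriangular hN]
    exact Finset.prod_ne_zero_iff.mpr fun t _ => hdiag t
  rw [← rank_of_det_ne_zero hdet]
  exact rank_submatrix_le M r s

lemma card_support_diagPoly_le_rank [CommRing R] [IsDomain R] (M : Matrix (Fin a) (Fin b) R)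
    (d : ℤ) (hM : ∀ i j : ℤ, j < i + d → M.extendByZero i j = 0) :
    (M.diagPoly d).support.card ≤ M.rank := by
  have hbounds (k : (M.diagPoly d).support) := M.bounds_of_extendByZero_ne_zero
    (M.coeff_diagPoly d k ▸ mem_support_iff.mp k.2)
  let r (k : (M.diagPoly d).support) : Fin a := ⟨k, by have := hbounds k; omega⟩
  let s (k : (M.diagPoly d).support) : Fin b := ⟨(k + d).toNat, by have := hbounds k; omega⟩
  have hs (k) : ((s k : ℕ) : ℤ) = k + d := Int.toNat_of_nonneg (hbounds k).2.2.1
  rw [← Fintype.card_coe]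
  refine card_le_rank_of_upperTriangular M r s (fun t u hut => ?_) (fun t => ?_)
  · rw [← M.extendByZero_natCast, hs]
    exact hM _ _ (by simp only [r]; exact add_lt_add_left (by exact_mod_cast hut) d)
  · rw [← M.extendByZero_natCast, hs, ← coeff_diagPoly]
    exact mem_support_iff.mp t.2

section CommRing

variable [CommRing R]

variable (R a b) in
def drezetExampleMap : Matrix (Fin a) (Fin b) R →ₗ[R] Matrix (Fin (a + 2)) (Fin (b + 2)) R where
  toFun f := of fun i j => 2 * f.extendByZero i j - 3 * f.extendByZero (i - 1) (j - 1) +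
    f.extendByZero (i - 2) (j - 2)
  map_add' f g := by ext; simp only [of_apply, add_apply, extendByZero_add]; ring
  map_smul' c f := by
    ext
    simp only [of_apply, smul_apply, extendByZero_smul, smul_eq_mul, RingHom.id_apply]
    ring

lemma extendByZero_drezetExampleMap (f : Matrix (Fin a) (Fin b) R) (i j : ℤ) :
    (drezetExampleMap R a b f).extendByZero i j = 2 * f.extendByZero i j -
      3 * f.extendByZero (i - 1) (j - 1) + f.extendByZero (i - 2) (j - 2) := by
  by_cases h : 0 ≤ i ∧ i < (a + 2 : ℕ) ∧ 0 ≤ j ∧ j < (b + 2 : ℕ)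
  · obtain ⟨hi, hia, hj, hjb⟩ := h
    lift i to ℕ using hi
    lift j to ℕ using hj
    exact (drezetExampleMap R a b f).extendByZero_natCast ⟨i, by omega⟩ ⟨j, by omega⟩
  · simp only [extendByZero_eq_zero _ h,
      f.extendByZero_eq_zero (i := i) (j := j) (by omega),
      f.extendByZero_eq_zero (i := i - 1) (j := j - 1) (by omega),
      f.extendByZero_eq_zero (i := i - 2) (j := j - 2) (by omega)]
    ring

lemma diagPoly_drezetExampleMap (f : Matrix (Fin a) (Fin b) R) (d : ℤ) :
    (drezetExampleMap R a b f).diagPoly d = (X - 1) * (X - 2) * f.diagPoly d := by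
  have hX : (X - 1) * (X - 2) * f.diagPoly d =
      X * (X * f.diagPoly d) - C 3 * (X * f.diagPoly d) + C 2 * f.diagPoly d := by
    simp only [map_ofNat]; ring
  ext k
  rw [hX, coeff_diagPoly, extendByZero_drezetExampleMap]
  rcases k with _ | _ | k
  · simp [coeff_diagPoly, f.extendByZero_eq_zero (i := -1),
      f.extendByZero_eq_zero (i := -2)]
  · simp [coeff_diagPoly, f.extendByZero_eq_zero (i := -1)]
    ring
  · simp only [coeff_add, coeff_sub, coeff_X_mul, coeff_C_mul, coeff_diagPoly]
    push_cast
    ring_nf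

theorem three_le_rank_drezetExampleMap [IsDomain R] [CharZero R] {f : Matrix (Fin a) (Fin b) R}
    (hf : f ≠ 0) : 3 ≤ (drezetExampleMap R a b f).rank := by
  obtain ⟨d, hd, hbelow⟩ := f.exists_lowest_diagPoly_ne_zero hf
  calc 3 ≤ ((X - 1) * (X - 2) * f.diagPoly d).support.card :=
        three_le_card_support_X_sub_one_mul_X_sub_two_mul hd
    _ = ((drezetExampleMap R a b f).diagPoly d).support.card := by
        rw [diagPoly_drezetExampleMap]
    _ ≤ (drezetExampleMap R a b f).rank := by
        refine card_support_diagPoly_le_rank _ d fun i j hij => ?_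
        rw [extendByZero_drezetExampleMap, hbelow _ _ hij, hbelow _ _ (by omega),
          hbelow _ _ (by omega)]
        ring

end CommRing

end Matrix

theorem stmt6_general {K : Type*} [Field K] [CharZero K]
    (n c : ℕ) (hn : 2 ≤ n) (hc : 2 ≤ c) :
    ∃ H : Submodule K (Matrix (Fin (n + 1)) (Fin c) K),
      Module.finrank K H = (n - 1) * (c - 2) ∧
      ∀ M ∈ H, M ≠ 0 → 3 ≤ M.rank := by
  obtain ⟨a, rfl⟩ : ∃ a, n = a + 1 := ⟨n - 1, by omega⟩
  obtain ⟨b, rfl⟩ : ∃ b, c = b + 2 := ⟨c - 2, by omega⟩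
  have hinj : Function.Injective (Matrix.drezetExampleMap K a b) := by
    refine (injective_iff_map_eq_zero _).mpr fun f hf => ?_
    by_contra hf0
    simpa [hf] using Matrix.three_le_rank_drezetExampleMap hf0
  refine ⟨LinearMap.range (Matrix.drezetExampleMap K a b), ?_, ?_⟩
  · simp [LinearMap.finrank_range_of_inj hinj, Module.finrank_matrix]
  · rintro M ⟨f, rfl⟩ hM
    exact Matrix.three_le_rank_drezetExampleMap fun hf => hM (by simp [hf])

/-- **Sharpness of the bound in Drézet's construction for `p = 1`.** There is a linear
subspace `H` of the space of `(n+1) × c` matrices of dimension `(n−1)(c−2)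
= (n+1)c − 2c − 2n + 2` all of whose nonzero elements have rank at least 3
(equivalently `H ∩ D^{⊕c} = 0` for every 2-dimensional subspace `D ⊆ K^{n+1}`). -/
theorem stmt6 {K : Type*} [Field K] [IsAlgClosed K] [CharZero K]
    (n c : ℕ) (hn : 2 ≤ n) (hc : 2 ≤ c) :
    ∃ H : Submodule K (Matrix (Fin (n + 1)) (Fin c) K),
      Module.finrank K H = (n - 1) * (c - 2) ∧
      ∀ M ∈ H, M ≠ 0 → 3 ≤ M.rank :=
  stmt6_general n c hn hc
end

section
/- Let K be an algebraically closed field of characteristic 0 and c ≥ 3 an integer, and let A_c be the explicit c×(2c+2) matrix of linear forms in the variables x, y, t over K defined in the context. Then: (i) rank A_c(p) = c for every p ∈ K³ \ {0}; (ii) the 2c+2 columns of A_c are linearly independent over K, i.e. there is no nonzero v ∈ K^{2c+2} with A_c(p)·v = 0 for all p ∈ K³; (iii) for every 2-dimensional subspace W ⊆ K³ the space {v ∈ K^{2c+2} : A_c(w)·v = 0 for all w ∈ W} has dimension exactly 2. (This is the claim of Example 9: A_c defines a 1-type uniform Steiner bundle on P² of the minimal rank c+2 with c₁ = −c and splitting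 type (−1^c, 0²) on every line.) -/
open Matrix

/-- Column index (1-based) of the `x` entry of row `j` of the matrix `A_c`:
`(p₁,p₂,p_j) = (1,4,2j+1)`. -/
def pcol (j : ℕ) : ℕ := if j = 1 then 1 else if j = 2 then 4 else 2 * j + 1

/-- Column index (1-based) of the `y` entry of row `j` of the matrix `A_c`:
`(q₁,q₂,q_j) = (2,5,2j+2)`. -/
def qcol (j : ℕ) : ℕ := pcol j + 1

/-- The entry of the matrix `A_c` in (1-based) row `i` and column `j`, evaluated at
`(x, y, t) = (p 0, p 1, p 2)`.  Rows `1` and `2` are `x` at `pcol i`, `y` at `qcol i`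
and `t` at `qcol i + 1`; row `i ≥ 3` is `x` at `2i+1`, `y` at `2i+2`, `t` at
`pcol (i−2)` and `t` at `qcol (i−1)`. -/
def AcEnt {R : Type*} [CommRing R] (p : Fin 3 → R) (i j : ℕ) : R :=
  if i ≤ 2 then
    (if j = pcol i then p 0 else 0) + (if j = qcol i then p 1 else 0) +
      (if j = qcol i + 1 then p 2 else 0)
  else
    (if j = 2 * i + 1 then p 0 else 0) + (if j = 2 * i + 2 then p 1 else 0) +
      (if j = pcol (i - 2) then p 2 else 0) + (if j = qcol (i - 1) then p 2 else 0)

/-- The explicit `c × (2c+2)` matrix `A_c` of Example 9, evaluated at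
`(x, y, t) = (p 0, p 1, p 2)`. -/
def Ac {R : Type*} [CommRing R] (c : ℕ) (p : Fin 3 → R) :
    Matrix (Fin c) (Fin (2 * c + 2)) R :=
  fun i j => AcEnt p ((i : ℕ) + 1) ((j : ℕ) + 1)

/-! If `∑ₘ (row m of A_c(z_m)) = 0` with all `z_m = (x_m, y_m, t_m)` in a proper subspace `W`
of `K³`, the columns `p_k`, `q_k`, `3`, `6` give `x_k = -t_{k+2}`, `y_k = -t_{k+1}` and
`t_1 = t_2 = 0`. As `W` lies in a plane `αx + βy + γt = 0`, the `t_m` obey the recurrence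
`α t_{m+2} + β t_{m+1} = γ t_m`, which together with `t_1 = t_2 = 0` forces `t = 0`, hence
`z = 0`. For a basis `w₁, w₂` of a plane `W` this says that the `2c` rows of `A_c(w₁)` and
`A_c(w₂)` are independent, which gives (iii) by rank–nullity; `W = K p` gives (i). For (ii),
the rows of `A_c(e_x)`, `A_c(e_y)` and the first two rows of `A_c(e_t)` are the standard basis
covectors `e_{p_m}`, `e_{q_m}`, `e_3`, `e_6`, and these exhaust all columns. -/

namespace Matrix

variable {K : Type*} [Field K] {ι m n : Type*} [Fintype ι] [Fintype n]

lemma rank_eq_card_of_vecMul_eq_zero [Fintype m] {M : Matrix m n K}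
    (h : ∀ u, u ᵥ* M = 0 → u = 0) :
    M.rank = Fintype.card m :=
  LinearIndependent.rank_matrix <| vecMul_injective_iff.1 fun u v huv =>
    sub_eq_zero.1 <| h _ <| by rw [sub_vecMul]; exact sub_eq_zero.2 huv

lemma finrank_iInf_ker_mulVecLin_add [Fintype m] {M : ι → Matrix m n K}
    (h : ∀ u : ι → m → K, ∑ i, u i ᵥ* M i = 0 → u = 0) :
    Module.finrank K (⨅ i, LinearMap.ker (M i).mulVecLin : Submodule K (n → K)) +
      Fintype.card ι * Fintype.card m =
      Fintype.card n := by
  let B : Matrix (ι × m) n K := of fun p j => M p.1 p.2 j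
  have hker : LinearMap.ker B.mulVecLin = ⨅ i, LinearMap.ker (M i).mulVecLin := by
    ext v
    simp [B, Submodule.mem_iInf, funext_iff, mulVec, dotProduct, Prod.forall]
  have hrank : B.rank = Fintype.card ι * Fintype.card m := by
    rw [rank_eq_card_of_vecMul_eq_zero, Fintype.card_prod]
    intro u hu
    have := h (fun i r => u (i, r)) <| by
      ext j
      simpa [B, vecMul, dotProduct, Fintype.sum_prod_type, Finset.sum_apply] using congrFun hu j
    ext ⟨i, r⟩
    exact congrFun (congrFun this i) r
  rw [← hker, ← hrank, add_comm]
  exact B.mulVecLin.finrank_range_add_finrank_ker.trans (Module.finrank_fintype_fun_eq_card K)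

lemma iInf_ker_mulVecLin_eq_iInf_basis {V : Type*} [AddCommGroup V] [Module K V]
    (f : V →ₗ[K] Matrix m n K) {W : Submodule K V} (b : Module.Basis ι K W) :
    ⨅ w ∈ W, LinearMap.ker (f w).mulVecLin = ⨅ i, LinearMap.ker (f (b i)).mulVecLin := by
  apply le_antisymm
  · exact le_iInf fun i => iInf₂_le _ (b i).2
  · intro v hv
    simp only [Submodule.mem_iInf, LinearMap.mem_ker, mulVecLin_apply] at hv ⊢
    intro w hw
    lift w to W using hw
    rw [← b.sum_repr w]
    simp only [Submodule.coe_sum, Submodule.coe_smul, map_sum, map_smul, sum_mulVec, smul_mulVec,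
      hv, smul_zero, Finset.sum_const_zero]

end Matrix

section

variable {K : Type*} [Field K]

lemma eq_zero_of_recurrence {s : ℕ → K} {α β γ : K} (hαβγ : α ≠ 0 ∨ β ≠ 0 ∨ γ ≠ 0)
    (h0 : s 0 = 0) (h1 : s 1 = 0) (h : ∀ n, α * s (n + 2) + β * s (n + 1) = γ * s n) (n : ℕ) :
    s n = 0 := by
  induction n using Nat.strong_induction_on with
  | _ n ih =>
    match n with
    | 0 => exact h0
    | 1 => exact h1
    | n + 2 =>
      by_cases hα : α = 0
      · by_cases hβ : β = 0
        · have hγ : γ ≠ 0 := by tauto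
          simpa [hα, hβ, hγ] using (h (n + 2)).symm
        · simpa [hα, hβ, ih (n + 1) (by omega)] using h (n + 1)
      · simpa [hα, ih n (by omega), ih (n + 1) (by omega)] using h n

lemma exists_plane_of_ne_top {W : Submodule K (Fin 3 → K)} (hW : W ≠ ⊤) :
    ∃ α β γ : K, (α ≠ 0 ∨ β ≠ 0 ∨ γ ≠ 0) ∧ ∀ v ∈ W, α * v 0 + β * v 1 + γ * v 2 = 0 := by
  obtain ⟨ℓ, hℓ, hWℓ⟩ := W.exists_le_ker_of_lt_top (lt_top_iff_ne_top.2 hW)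
  have hℓv (v : Fin 3 → K) :
      ℓ v = ℓ (Pi.single 0 1) * v 0 + ℓ (Pi.single 1 1) * v 1 + ℓ (Pi.single 2 1) * v 2 := by
    conv_lhs => rw [show v = v 0 • Pi.single 0 1 + v 1 • Pi.single 1 1 + v 2 • Pi.single 2 1 by
      ext i; fin_cases i <;> simp]
    simp only [map_add, map_smul, smul_eq_mul]
    ring
  refine ⟨_, _, _, ?_, fun v hv => (hℓv v).symm.trans (hWℓ hv)⟩
  by_contra! h0
  exact hℓ (LinearMap.ext fun v => by rw [hℓv, h0.1, h0.2.1, h0.2.2]; simp)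

end

lemma Fin.sum_ite_succ_eq {M : Type*} [AddCommMonoid M] {c : ℕ} {f : ℕ → M}
    (hf : ∀ m, m = 0 ∨ c < m → f m = 0) (k : ℕ) :
    ∑ i : Fin c, (if (i : ℕ) + 1 = k then f (i + 1) else 0) = f k := by
  by_cases hk : 1 ≤ k ∧ k ≤ c
  · rw [Fintype.sum_eq_single ⟨k - 1, by omega⟩ fun i hi =>
      if_neg fun h => hi (Fin.ext (show (i : ℕ) = k - 1 by omega))]
    simp only [show k - 1 + 1 = k by omega, if_true]
  · rw [hf k (by omega)]
    exact Finset.sum_eq_zero fun i _ => if_neg (by omega)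

lemma pcol_cases (j : ℕ) :
    (j = 1 ∧ pcol j = 1) ∨ (j = 2 ∧ pcol j = 4) ∨ (j ≠ 1 ∧ j ≠ 2 ∧ pcol j = 2 * j + 1) := by
  unfold pcol
  split_ifs <;> omega

section Entries

variable {R : Type*} [CommRing R]

lemma AcEnt_add (p q : Fin 3 → R) (m n : ℕ) :
    AcEnt (p + q) m n = AcEnt p m n + AcEnt q m n := by
  simp only [AcEnt, Pi.add_apply]
  split_ifs <;> ring

lemma AcEnt_smul (a : R) (p : Fin 3 → R) (m n : ℕ) : AcEnt (a • p) m n = a * AcEnt p m n := by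
  simp only [AcEnt, Pi.smul_apply, smul_eq_mul]
  split_ifs <;> ring

lemma AcEnt_pcol (p : Fin 3 → R) {m k : ℕ} (hm : 1 ≤ m) (hk : 1 ≤ k) :
    AcEnt p m (pcol k) = (if m = k then p 0 else 0) + (if m = k + 2 then p 2 else 0) := by
  have := pcol_cases k; have := pcol_cases m; have := pcol_cases (m - 2)
  have := pcol_cases (m - 1)
  unfold AcEnt qcol
  split_ifs <;> first | omega | simp

lemma AcEnt_qcol (p : Fin 3 → R) {m k : ℕ} (hm : 1 ≤ m) (hk : 2 ≤ k) :
    AcEnt p m (qcol k) = (if m = k then p 1 else 0) + (if m = k + 1 then p 2 else 0) := by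
  have := pcol_cases k; have := pcol_cases m; have := pcol_cases (m - 2)
  have := pcol_cases (m - 1)
  unfold AcEnt qcol
  split_ifs <;> first | omega | simp

lemma AcEnt_two (p : Fin 3 → R) {m : ℕ} (hm : 1 ≤ m) :
    AcEnt p m 2 = if m = 1 then p 1 else 0 := by
  have := pcol_cases m; have := pcol_cases (m - 2); have := pcol_cases (m - 1)
  unfold AcEnt qcol
  split_ifs <;> first | omega | simp

lemma AcEnt_three (p : Fin 3 → R) {m : ℕ} (hm : 1 ≤ m) :
    AcEnt p m 3 = if m = 1 then p 2 else 0 := by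
  have := pcol_cases m; have := pcol_cases (m - 2); have := pcol_cases (m - 1)
  unfold AcEnt qcol
  split_ifs <;> first | omega | simp

lemma AcEnt_six (p : Fin 3 → R) {m : ℕ} (hm : 1 ≤ m) :
    AcEnt p m 6 = if m = 2 then p 2 else 0 := by
  have := pcol_cases m; have := pcol_cases (m - 2); have := pcol_cases (m - 1)
  unfold AcEnt qcol
  split_ifs <;> first | omega | simp

lemma AcEnt_single_zero (m n : ℕ) :
    AcEnt (Pi.single 0 1 : Fin 3 → R) m n = if n = pcol m then 1 else 0 := by
  have := pcol_cases m
  unfold AcEnt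
  split_ifs <;> first | omega | simp

lemma AcEnt_single_one (m n : ℕ) :
    AcEnt (Pi.single 1 1 : Fin 3 → R) m n = if n = qcol m then 1 else 0 := by
  have := pcol_cases m
  unfold AcEnt qcol
  split_ifs <;> first | omega | simp

lemma AcEnt_single_two_one (n : ℕ) :
    AcEnt (Pi.single 2 1 : Fin 3 → R) 1 n = if n = 3 then 1 else 0 := by
  simp [AcEnt, qcol, pcol]

lemma AcEnt_single_two_two (n : ℕ) :
    AcEnt (Pi.single 2 1 : Fin 3 → R) 2 n = if n = 6 then 1 else 0 := by
  simp [AcEnt, qcol, pcol]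

end Entries

def acLinearMap (R : Type*) [CommRing R] (c : ℕ) :
    (Fin 3 → R) →ₗ[R] Matrix (Fin c) (Fin (2 * c + 2)) R where
  toFun := Ac c
  map_add' p q := by ext i j; exact AcEnt_add p q _ _
  map_smul' a p := by ext i j; exact AcEnt_smul a p _ _

@[simp]
lemma acLinearMap_apply {R : Type*} [CommRing R] (c : ℕ) (p : Fin 3 → R) :
    acLinearMap R c p = Ac c p :=
  rfl

section ColumnSums

variable {R : Type*} [CommRing R] {c : ℕ} {Z : ℕ → Fin 3 → R}

lemma sum_AcEnt_eq_of_ite {n a : ℕ} {r : Fin 3} (hZ : ∀ m, m = 0 ∨ c < m → Z m = 0)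
    (h : ∀ (p : Fin 3 → R) m, 1 ≤ m → AcEnt p m n = if m = a then p r else 0) :
    ∑ i : Fin c, AcEnt (Z (i + 1)) (i + 1) n = Z a r := by
  simp only [h _ _ (Nat.le_add_left 1 _)]
  exact Fin.sum_ite_succ_eq (f := fun m => Z m r) (by simp +contextual [hZ]) a

lemma sum_AcEnt_eq_of_ite_add {n a b : ℕ} {r s : Fin 3} (hZ : ∀ m, m = 0 ∨ c < m → Z m = 0)
    (h : ∀ (p : Fin 3 → R) m, 1 ≤ m →
      AcEnt p m n = (if m = a then p r else 0) + (if m = b then p s else 0)) :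
    ∑ i : Fin c, AcEnt (Z (i + 1)) (i + 1) n = Z a r + Z b s := by
  simp only [h _ _ (Nat.le_add_left 1 _), Finset.sum_add_distrib]
  rw [Fin.sum_ite_succ_eq (f := fun m => Z m r) (by simp +contextual [hZ]) a,
    Fin.sum_ite_succ_eq (f := fun m => Z m s) (by simp +contextual [hZ]) b]

end ColumnSums

section

variable {K : Type*} [Field K]

lemma eq_zero_of_sum_AcEnt_eq_zero {c : ℕ} {α β γ : K} (hαβγ : α ≠ 0 ∨ β ≠ 0 ∨ γ ≠ 0)
    {Z : ℕ → Fin 3 → K} (hZ : ∀ m, m = 0 ∨ c < m → Z m = 0)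
    (hplane : ∀ m, α * Z m 0 + β * Z m 1 + γ * Z m 2 = 0)
    (hcol : ∀ n, 1 ≤ n → n ≤ 2 * c + 2 → ∑ i : Fin c, AcEnt (Z (i + 1)) (i + 1) n = 0)
    (m : ℕ) : Z m = 0 := by
  have ht1 : Z 1 2 = 0 := by
    rcases Nat.eq_zero_or_pos c with hc | hc
    · exact congrFun (hZ 1 (by omega)) 2
    · rw [← sum_AcEnt_eq_of_ite hZ fun p _ hm => AcEnt_three p hm]
      exact hcol 3 (by omega) (by omega)
  have ht2 : Z 2 2 = 0 := by
    rcases Nat.lt_or_ge c 2 with hc | hc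
    · exact congrFun (hZ 2 (by omega)) 2
    · rw [← sum_AcEnt_eq_of_ite hZ fun p _ hm => AcEnt_six p hm]
      exact hcol 6 (by omega) (by omega)
  have hx : ∀ k, 1 ≤ k → Z k 0 + Z (k + 2) 2 = 0 := by
    intro k hk
    by_cases hkc : k ≤ c
    · rw [← sum_AcEnt_eq_of_ite_add hZ fun p _ hm => AcEnt_pcol p hm hk]
      exact hcol _ (by have := pcol_cases k; omega) (by have := pcol_cases k; omega)
    · simp [hZ k (by omega), hZ (k + 2) (by omega)]
  have hy : ∀ k, 1 ≤ k → Z k 1 + Z (k + 1) 2 = 0 := by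
    intro k hk
    by_cases hkc : k ≤ c
    · rcases Nat.lt_or_ge k 2 with hk2 | hk2
      · obtain rfl : k = 1 := by omega
        rw [ht2, add_zero, ← sum_AcEnt_eq_of_ite hZ fun p _ hm => AcEnt_two p hm]
        exact hcol 2 (by omega) (by omega)
      · rw [← sum_AcEnt_eq_of_ite_add hZ fun p _ hm => AcEnt_qcol p hm hk2]
        exact hcol _ (by have := pcol_cases k; simp only [qcol]; omega)
          (by have := pcol_cases k; simp only [qcol]; omega)
    · simp [hZ k (by omega), hZ (k + 1) (by omega)]
  have ht : ∀ n, Z (n + 1) 2 = 0 :=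
    eq_zero_of_recurrence (s := fun n => Z (n + 1) 2) hαβγ ht1 ht2 fun n => by
      linear_combination -hplane (n + 1) + α * hx (n + 1) (by omega) + β * hy (n + 1) (by omega)
  rcases m with _ | n
  · exact hZ 0 (Or.inl rfl)
  · ext r
    fin_cases r
    · simpa [ht] using hx (n + 1) (by omega)
    · simpa [ht] using hy (n + 1) (by omega)
    · exact ht n

lemma eq_zero_of_sum_Ac_eq_zero {c : ℕ} {W : Submodule K (Fin 3 → K)} (hW : W ≠ ⊤)
    {z : Fin c → Fin 3 → K} (hzW : ∀ i, z i ∈ W) (h : ∀ j, ∑ i, Ac c (z i) i j = 0) : z = 0 := by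
  obtain ⟨α, β, γ, hαβγ, hplane⟩ := exists_plane_of_ne_top hW
  have hinj : Function.Injective fun i : Fin c => (i : ℕ) + 1 := fun i j hij =>
    Fin.ext (by simpa using hij)
  set Z : ℕ → Fin 3 → K := Function.extend (fun i : Fin c => (i : ℕ) + 1) z 0
  have hZz (i : Fin c) : Z (i + 1) = z i := hinj.extend_apply z 0 i
  have hZ : ∀ m, m = 0 ∨ c < m → Z m = 0 := fun m hm =>
    Function.extend_apply' _ _ _ (by rintro ⟨i, rfl⟩; omega)
  have hZW (m : ℕ) : Z m ∈ W := by
    by_cases hm : ∃ i : Fin c, (i : ℕ) + 1 = m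
    · obtain ⟨i, rfl⟩ := hm
      exact hZz i ▸ hzW i
    · rw [show Z m = 0 from Function.extend_apply' z (0 : ℕ → Fin 3 → K) m hm]
      exact W.zero_mem
  have hZ0 := eq_zero_of_sum_AcEnt_eq_zero hαβγ hZ (fun m => hplane _ (hZW m)) fun n hn hn' => by
    simpa [Ac, hZz, Nat.sub_add_cancel hn] using h ⟨n - 1, by omega⟩
  exact funext fun i => (hZz i).symm.trans (hZ0 _)

lemma sum_smul_eq_zero_of_sum_vecMul_Ac_eq_zero {ι : Type*} [Fintype ι] {c : ℕ}
    {W : Submodule K (Fin 3 → K)} (hW : W ≠ ⊤) {w : ι → Fin 3 → K} (hw : ∀ i, w i ∈ W)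
    {u : ι → Fin c → K} (h : ∑ i, u i ᵥ* Ac c (w i) = 0) (r : Fin c) :
    ∑ i, u i r • w i = 0 := by
  refine congrFun (eq_zero_of_sum_Ac_eq_zero hW (z := fun r => ∑ i, u i r • w i)
    (fun r => W.sum_mem fun i _ => W.smul_mem _ (hw i)) fun j => ?_) r
  have := congrFun h j
  simp only [Finset.sum_apply, vecMul, dotProduct, Pi.zero_apply] at this
  rw [Finset.sum_comm] at this
  simpa [← acLinearMap_apply, Matrix.sum_apply, Finset.mul_sum] using this

theorem rank_Ac {c : ℕ} {p : Fin 3 → K} (hp : p ≠ 0) : (Ac c p).rank = c := by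
  have hW : K ∙ p ≠ ⊤ := fun h => by
    have := finrank_span_singleton (K := K) hp
    rw [h, finrank_top] at this
    simp at this
  rw [Matrix.rank_eq_card_of_vecMul_eq_zero fun u hu => ?_, Fintype.card_fin]
  ext r
  simpa [hp] using sum_smul_eq_zero_of_sum_vecMul_Ac_eq_zero (ι := Unit) hW
    (fun _ => Submodule.mem_span_singleton_self p) (u := fun _ => u) (by simpa using hu) r

lemma exists_eq_pcol_or_eq_qcol {c n : ℕ} (hc : 2 ≤ c) (h1 : 1 ≤ n) (h2 : n ≤ 2 * c + 2) :
    (∃ k, 1 ≤ k ∧ k ≤ c ∧ n = pcol k) ∨ (∃ k, 1 ≤ k ∧ k ≤ c ∧ n = qcol k) ∨ n = 3 ∨ n = 6 := by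
  by_cases h6 : n ≤ 6
  · interval_cases n
    · exact Or.inl ⟨1, le_rfl, by omega, rfl⟩
    · exact Or.inr (Or.inl ⟨1, le_rfl, by omega, rfl⟩)
    · simp
    · exact Or.inl ⟨2, by omega, hc, rfl⟩
    · exact Or.inr (Or.inl ⟨2, by omega, hc, rfl⟩)
    · simp
  · rcases Nat.even_or_odd' n with ⟨k, rfl | rfl⟩
    · refine Or.inr (Or.inl ⟨k - 1, by omega, by omega, ?_⟩)
      have := pcol_cases (k - 1)
      simp only [qcol]
      omega
    · refine Or.inl ⟨k, by omega, by omega, ?_⟩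
      have := pcol_cases k
      omega

lemma Ac_mulVec_apply_of_AcEnt {c : ℕ} {p : Fin 3 → K} (v : Fin (2 * c + 2) → K) {i : Fin c}
    {j : Fin (2 * c + 2)} (h : ∀ n, AcEnt p (i + 1) n = if n = j + 1 then 1 else 0) :
    (Ac c p *ᵥ v) i = v j := by
  simp [Matrix.mulVec, dotProduct, Ac, h, Fin.val_inj]

theorem eq_zero_of_forall_Ac_mulVec_eq_zero {c : ℕ} (hc : 2 ≤ c) {v : Fin (2 * c + 2) → K}
    (hv : ∀ p, Ac c p *ᵥ v = 0) : v = 0 := by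
  ext j
  have hv' (p : Fin 3 → K) (i : Fin c)
      (h : ∀ n, AcEnt p (i + 1) n = if n = j + 1 then 1 else 0) : v j = 0 := by
    rw [← Ac_mulVec_apply_of_AcEnt v h, hv, Pi.zero_apply]
  rcases exists_eq_pcol_or_eq_qcol hc (Nat.le_add_left 1 j) j.isLt with
    ⟨k, hk, hkc, hj⟩ | ⟨k, hk, hkc, hj⟩ | hj | hj
  · exact hv' (Pi.single 0 1) ⟨k - 1, by omega⟩ fun n => by
      simp [AcEnt_single_zero, Nat.sub_add_cancel hk, hj]
  · exact hv' (Pi.single 1 1) ⟨k - 1, by omega⟩ fun n => by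
      simp [AcEnt_single_one, Nat.sub_add_cancel hk, hj]
  · exact hv' (Pi.single 2 1) ⟨0, by omega⟩ fun n => by simp [AcEnt_single_two_one, hj]
  · exact hv' (Pi.single 2 1) ⟨1, by omega⟩ fun n => by simp [AcEnt_single_two_two, hj]

theorem finrank_iInf_ker_Ac {c : ℕ} {W : Submodule K (Fin 3 → K)} (hW : Module.finrank K W = 2) :
    Module.finrank K
      (⨅ w ∈ W, LinearMap.ker (Ac c w).mulVecLin : Submodule K (Fin (2 * c + 2) → K)) = 2 := by
  have b : Module.Basis (Fin 2) K W := Module.finBasisOfFinrankEq K W hW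
  have hWtop : W ≠ ⊤ := fun h => by
    rw [h, finrank_top] at hW
    simp at hW
  have hb : LinearIndependent K fun i => (b i : Fin 3 → K) :=
    b.linearIndependent.map' W.subtype W.ker_subtype
  have hrows (u : Fin 2 → Fin c → K) (hu : ∑ i, u i ᵥ* Ac c (b i : Fin 3 → K) = 0) : u = 0 := by
    ext i r
    have hr := sum_smul_eq_zero_of_sum_vecMul_Ac_eq_zero hWtop (fun i => (b i).2) hu r
    exact Fintype.linearIndependent_iff.1 hb (fun i => u i r) hr i
  have := Matrix.finrank_iInf_ker_mulVecLin_add hrows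
  have hiInf := Matrix.iInf_ker_mulVecLin_eq_iInf_basis (acLinearMap K c) b
  simp only [acLinearMap_apply] at hiInf
  rw [hiInf]
  simp only [Fintype.card_fin] at this
  omega

end

theorem stmt8_general {K : Type*} [Field K]
    (c : ℕ) (hc : 3 ≤ c) :
    (∀ p : Fin 3 → K, p ≠ 0 → (Ac c p).rank = c) ∧
    (∀ v : Fin (2 * c + 2) → K,
      (∀ p : Fin 3 → K, (Ac c p).mulVec v = 0) → v = 0) ∧
    (∀ W : Submodule K (Fin 3 → K), Module.finrank K W = 2 →
      Module.finrank K
        (⨅ w ∈ W, LinearMap.ker (Ac c w).mulVecLin : Submodule K (Fin (2 * c + 2) → K))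
        = 2) :=
  ⟨fun _ hp => rank_Ac hp, fun _ hv => eq_zero_of_forall_Ac_mulVec_eq_zero (by omega) hv,
    fun _ hW => finrank_iInf_ker_Ac hW⟩

/-- **Example 9 (general `c`).** The explicit matrix `A_c` defines a 1-type uniform
Steiner bundle on P² of the minimal rank `c + 2` with `c₁ = −c`: (i) `A_c(p)` has rank
`c` for all `p ≠ 0`; (ii) the columns of `A_c` are linearly independent over `K`;
(iii) for every 2-dimensional subspace `W ⊆ K³` the common kernel of the evaluations
`A_c(w)`, `w ∈ W`, has dimension exactly `2` (splitting type `(−1^c, 0²)` on every line). -/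
theorem stmt8 {K : Type*} [Field K] [IsAlgClosed K] [CharZero K]
    (c : ℕ) (hc : 3 ≤ c) :
    (∀ p : Fin 3 → K, p ≠ 0 → (Ac c p).rank = c) ∧
    (∀ v : Fin (2 * c + 2) → K,
      (∀ p : Fin 3 → K, (Ac c p).mulVec v = 0) → v = 0) ∧
    (∀ W : Submodule K (Fin 3 → K), Module.finrank K W = 2 →
      Module.finrank K
        (⨅ w ∈ W, LinearMap.ker (Ac c w).mulVecLin : Submodule K (Fin (2 * c + 2) → K))
        = 2) :=
  stmt8_general c hc
end
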